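/- Let X ⊆ ℝⁿ be a closed subset, let x₀ ∈ X, and let π : ℝⁿ → ℝˡ be a surjective ℝ-linear map. Let Σ₀ denote the closure, in the unit sphere of ℝⁿ, of the set of secant directions {(x − x₀)/‖x − x₀‖ : x ∈ X, x ≠ x₀}. Then the following are equivalent: (i) there exists c > 0 such that c·‖x − x₀‖ ≤ ‖π(x) − π(x₀)‖ for all x ∈ X (equivalently, π restricted to X satisfies the two-sided semi-bi-Lipschitz estimate at x₀, the upper bound ‖π(x) − π(x₀)‖ ≤ ‖π‖·‖x − x₀‖ being automatic); (ii) Σ₀ ∩ ker π = ∅. -/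

import Mathlib

/-!
Dividing the lower bound `c * ‖x - x₀‖ ≤ ‖π x - π x₀‖` by `‖x - x₀‖` turns it into the bound
`c ≤ ‖π u‖` on the secant directions `u`, and this closed condition passes to their closure.
Conversely, the closure of the secant directions lies in the unit sphere, hence is compact, so if
`‖π u‖` never vanishes on it, it is bounded below there by a positive constant.
-/

open Set Metric

section SecantDirections

variable {E F : Type*} [NormedAddCommGroup E] [NormedSpace ℝ E]
  [NormedAddCommGroup F] [NormedSpace ℝ F]

def secantDirections (X : Set E) (x₀ : E) : Set E :=
  {v | ∃ x ∈ X, x ≠ x₀ ∧ v = ‖x - x₀‖⁻¹ • (x - x₀)}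

theorem secantDirections_subset_sphere (X : Set E) (x₀ : E) :
    secantDirections X x₀ ⊆ sphere 0 1 := by
  rintro _ ⟨x, -, hx, rfl⟩
  have hx : ‖x - x₀‖ ≠ 0 := norm_ne_zero_iff.mpr (sub_ne_zero.mpr hx)
  rw [mem_sphere_zero_iff_norm, norm_smul, norm_inv, norm_norm, inv_mul_cancel₀ hx]

theorem isCompact_closure_secantDirections [ProperSpace E] (X : Set E) (x₀ : E) :
    IsCompact (closure (secantDirections X x₀)) :=
  (isCompact_sphere 0 1).of_isClosed_subset isClosed_closure
    (closure_minimal (secantDirections_subset_sphere X x₀) isClosed_sphere)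

theorem norm_map_secantDirection (f : E →L[ℝ] F) (x x₀ : E) :
    ‖f (‖x - x₀‖⁻¹ • (x - x₀))‖ = ‖x - x₀‖⁻¹ * ‖f x - f x₀‖ := by
  rw [map_smul, norm_smul, map_sub, norm_inv, norm_norm]

theorem le_norm_map_secantDirection_iff (f : E →L[ℝ] F) {x x₀ : E} (hx : x ≠ x₀) (c : ℝ) :
    c ≤ ‖f (‖x - x₀‖⁻¹ • (x - x₀))‖ ↔ c * ‖x - x₀‖ ≤ ‖f x - f x₀‖ := by
  rw [norm_map_secantDirection, ← div_eq_inv_mul,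
    le_div_iff₀ (norm_pos_iff.mpr (sub_ne_zero.mpr hx))]

theorem closure_secantDirections_subset_of_lower_bound (f : E →L[ℝ] F) {X : Set E} {x₀ : E}
    {c : ℝ} (h : ∀ x ∈ X, c * ‖x - x₀‖ ≤ ‖f x - f x₀‖) :
    closure (secantDirections X x₀) ⊆ {u | c ≤ ‖f u‖} := by
  refine closure_minimal ?_ (isClosed_le continuous_const f.continuous.norm)
  rintro _ ⟨x, hxX, hx, rfl⟩
  exact (le_norm_map_secantDirection_iff f hx c).mpr (h x hxX)

theorem exists_lower_bound_iff_disjoint_closure_secantDirections_ker [ProperSpace E]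
    (f : E →L[ℝ] F) (X : Set E) (x₀ : E) :
    (∃ c : ℝ, 0 < c ∧ ∀ x ∈ X, c * ‖x - x₀‖ ≤ ‖f x - f x₀‖) ↔
      Disjoint (closure (secantDirections X x₀)) {v | f v = 0} := by
  constructor
  · rintro ⟨c, hc, h⟩
    refine disjoint_left.mpr fun u hu hfu => ?_
    have hcu : c ≤ ‖f u‖ := closure_secantDirections_subset_of_lower_bound f h hu
    rw [show f u = 0 from hfu, norm_zero] at hcu
    exact hcu.not_gt hc
  · intro hdisj
    have hpos : ∀ u ∈ closure (secantDirections X x₀), 0 < ‖f u‖ := fun u hu =>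
      norm_pos_iff.mpr fun hfu => disjoint_left.mp hdisj hu hfu
    obtain ⟨c, hc, hcle⟩ := (isCompact_closure_secantDirections X x₀).exists_forall_le'
      f.continuous.norm.continuousOn hpos
    refine ⟨c, hc, fun x hxX => ?_⟩
    rcases eq_or_ne x x₀ with rfl | hx
    · simp
    · exact (le_norm_map_secantDirection_iff f hx c).mp
        (hcle _ (subset_closure ⟨x, hxX, hx, rfl⟩))

end SecantDirections

theorem stmt_2_general (n l : ℕ) (X : Set (EuclideanSpace ℝ (Fin n)))
    (x₀ : EuclideanSpace ℝ (Fin n))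
    (π : EuclideanSpace ℝ (Fin n) →L[ℝ] EuclideanSpace ℝ (Fin l)) :
    (∃ c : ℝ, 0 < c ∧ ∀ x ∈ X, c * ‖x - x₀‖ ≤ ‖π x - π x₀‖) ↔
      closure {v : EuclideanSpace ℝ (Fin n) |
          ∃ x ∈ X, x ≠ x₀ ∧ v = ‖x - x₀‖⁻¹ • (x - x₀)} ∩
        {v : EuclideanSpace ℝ (Fin n) | π v = 0} = ∅ :=
  (exists_lower_bound_iff_disjoint_closure_secantDirections_ker π X x₀).trans
    disjoint_iff_inter_eq_empty

/-- For a closed `X ⊆ ℝⁿ`, `x₀ ∈ X`, and a surjective `ℝ`-linear projection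
`π : ℝⁿ → ℝˡ`, the restriction `π|_X` is semi-bi-Lipschitz at `x₀` (i.e. admits a lower bound
`c·‖x - x₀‖ ≤ ‖π x - π x₀‖` on `X`, the upper bound being automatic) if and only if the closure
`Σ₀` of the set of secant directions of `X` through `x₀` is disjoint from `ker π`. -/
theorem stmt_2 (n l : ℕ) (X : Set (EuclideanSpace ℝ (Fin n))) (hXcl : IsClosed X)
    (x₀ : EuclideanSpace ℝ (Fin n)) (hx₀ : x₀ ∈ X)
    (π : EuclideanSpace ℝ (Fin n) →L[ℝ] EuclideanSpace ℝ (Fin l))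
    (hsurj : Function.Surjective π) :
    (∃ c : ℝ, 0 < c ∧ ∀ x ∈ X, c * ‖x - x₀‖ ≤ ‖π x - π x₀‖) ↔
      closure {v : EuclideanSpace ℝ (Fin n) |
          ∃ x ∈ X, x ≠ x₀ ∧ v = ‖x - x₀‖⁻¹ • (x - x₀)} ∩
        {v : EuclideanSpace ℝ (Fin n) | π v = 0} = ∅ :=
  stmt_2_general n l X x₀ π
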